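/- arXiv:2506.18352 — 4 statements merged into one kernel-verified Lean document; each statement's English description precedes it below -/
import Mathlib

section
/- Let X be a nonempty compact metric space with covering dimension d < ∞. Then every finite open cover 𝒱 of X admits a refinement 𝒲 that can be written as a union of d+1 subfamilies, each consisting of pairwise disjoint open sets, with the cardinality of 𝒲 at most (d+1)·|𝒱|. -/
open Set
open scoped ENNReal

variable {X : Type*}

/-- A finite open cover of `X`. -/
def IsFinOpenCover [TopologicalSpace X] (𝒰 : Finset (Set X)) : Prop :=
  (∀ U ∈ 𝒰, IsOpen U) ∧ ⋃₀ (𝒰 : Set (Set X)) = Set.univ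

/-- `𝒲` refines `𝒰`: every member of `𝒲` is contained in some member of `𝒰`. -/
def CoverRefines (𝒲 𝒰 : Finset (Set X)) : Prop :=
  ∀ W ∈ 𝒲, ∃ U ∈ 𝒰, W ⊆ U

/-- A family of sets is `n`-coloured if it is a union of `n` subfamilies, each consisting of
pairwise disjoint sets. -/
def IsColoured (n : ℕ) (𝒲 : Finset (Set X)) : Prop :=
  letI := Classical.decEq (Set X)
  ∃ f : Fin n → Finset (Set X),
    𝒲 = Finset.univ.biUnion f ∧
    ∀ i : Fin n, ∀ V ∈ f i, ∀ W ∈ f i, V ≠ W → Disjoint V W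

/-- Lebesgue covering dimension at most `d`: every finite open cover admits a finite open
refinement of order at most `d + 1`. -/
def CoveringDimLE (X : Type*) [TopologicalSpace X] (d : ℕ) : Prop :=
  ∀ 𝒰 : Finset (Set X), IsFinOpenCover 𝒰 →
    ∃ 𝒲 : Finset (Set X), IsFinOpenCover 𝒲 ∧ CoverRefines 𝒲 𝒰 ∧
      ∀ x : X, Set.ncard {W : Set X | W ∈ 𝒲 ∧ x ∈ W} ≤ d + 1

/-- The dynamical refinement `𝒰₀ⁿ⁻¹ = ⋁_{j=0}^{n-1} T⁻ʲ(𝒰)`. -/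
noncomputable def dynCover (T : X → X) (𝒰 : Finset (Set X)) : ℕ → Finset (Set X)
  | 0 => {Set.univ}
  | n + 1 =>
    letI := Classical.decEq (Set X)
    (𝒰 ×ˢ dynCover T 𝒰 n).image fun p => p.1 ∩ T ⁻¹' p.2

/-- `N(𝒰)`: the minimal cardinality of a subcover of `𝒰`. -/
noncomputable def coverMin [TopologicalSpace X] (𝒰 : Finset (Set X)) : ℕ :=
  sInf {k | ∃ 𝒱 : Finset (Set X), 𝒱 ⊆ 𝒰 ∧ ⋃₀ (𝒱 : Set (Set X)) = Set.univ ∧ 𝒱.card = k}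

/-- `N_c(𝒰)`: the minimal cardinality of a `(d+1)`-coloured open refinement of `𝒰`. -/
noncomputable def colouredMin [TopologicalSpace X] (d : ℕ) (𝒰 : Finset (Set X)) : ℕ :=
  sInf {k | ∃ 𝒲 : Finset (Set X), IsFinOpenCover 𝒲 ∧ CoverRefines 𝒲 𝒰 ∧
    IsColoured (d + 1) 𝒲 ∧ 𝒲.card = k}

/-- Topological entropy via open covers. -/
noncomputable def topEntropy [TopologicalSpace X] (T : X → X) : ℝ≥0∞ :=
  ⨆ (𝒰 : Finset (Set X)) (_ : IsFinOpenCover 𝒰),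
    Filter.atTop.limsup fun n : ℕ =>
      ENNReal.ofReal (Real.log (coverMin (dynCover T 𝒰 n)) / n)

/-- Coloured topological entropy `h_{top,c}`. -/
noncomputable def colouredEntropy [TopologicalSpace X] (d : ℕ) (T : X → X) : ℝ≥0∞ :=
  ⨆ (𝒰 : Finset (Set X)) (_ : IsFinOpenCover 𝒰),
    Filter.atTop.limsup fun n : ℕ =>
      ENNReal.ofReal (Real.log (colouredMin d (dynCover T 𝒰 n)) / n)

/-- A nonempty compact metric space of covering dimension at most `d` admits,
for every finite open cover `𝒱`, a `(d+1)`-coloured open refinement `𝒲` with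
`|𝒲| ≤ (d+1) · |𝒱|`. -/
theorem finite_cover_coloured_refinement
    {X : Type*} [MetricSpace X] [CompactSpace X] [Nonempty X] (d : ℕ)
    (hdim : CoveringDimLE X d) (𝒱 : Finset (Set X)) (h𝒱 : IsFinOpenCover 𝒱) :
    ∃ 𝒲 : Finset (Set X), IsFinOpenCover 𝒲 ∧ CoverRefines 𝒲 𝒱 ∧
      IsColoured (d + 1) 𝒲 ∧ 𝒲.card ≤ (d + 1) * 𝒱.card := by
  classical
  obtain ⟨𝒜, ⟨h𝒜o, h𝒜cov⟩, h𝒜ref, h𝒜ord⟩ := hdim 𝒱 h𝒱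
  set ι := {A : Set X // A ∈ 𝒜} with hι
  have hUnion : (univ : Set X) ⊆ ⋃ i : ι, (i : Set X) := by
    intro x _
    have hx : x ∈ ⋃₀ (𝒜 : Set (Set X)) := h𝒜cov ▸ mem_univ x
    obtain ⟨A, hA, hxA⟩ := hx
    exact mem_iUnion.2 ⟨⟨A, Finset.mem_coe.1 hA⟩, hxA⟩
  obtain ⟨f, hf⟩ := PartitionOfUnity.exists_isSubordinate (s := (univ : Set X))
    isClosed_univ (fun i : ι => (i : Set X)) (fun i => h𝒜o i i.2) hUnion
  have hpos_mem : ∀ (i : ι) (x : X), 0 < f i x → x ∈ (i : Set X) := fun i x h =>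
    hf i (subset_tsupport _ (Function.mem_support.2 h.ne'))
  -- the basic open sets
  set U : Finset ι → Set X := fun E =>
    ⋂ i ∈ E, ({x | 0 < f i x} ∩ ⋂ j ∈ Eᶜ, {x | f j x < f i x}) with hU
  have hmemU : ∀ (E : Finset ι) (x : X),
      x ∈ U E ↔ ∀ i ∈ E, 0 < f i x ∧ ∀ j, j ∉ E → f j x < f i x := by
    intro E x
    simp [hU, Finset.mem_compl]
  have hUopen : ∀ E, IsOpen (U E) := by
    intro E
    refine isOpen_biInter_finset fun i _ => ?_
    refine (isOpen_lt continuous_const (f i).continuous).inter ?_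
    exact isOpen_biInter_finset fun j _ => isOpen_lt (f j).continuous (f i).continuous
  have hUdisj : ∀ E E' : Finset ι, E.card = E'.card → E ≠ E' → Disjoint (U E) (U E') := by
    intro E E' hcard hne
    rw [Set.disjoint_left]
    intro x hxE hxE'
    have h1 : ¬ E ⊆ E' := fun h => hne (Finset.eq_of_subset_of_card_le h (le_of_eq hcard.symm))
    have h2 : ¬ E' ⊆ E := fun h => hne (Finset.eq_of_subset_of_card_le h (le_of_eq hcard)).symm
    obtain ⟨i, hiE, hiE'⟩ := Finset.not_subset.1 h1
    obtain ⟨i', hi'E', hi'E⟩ := Finset.not_subset.1 h2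
    have a : f i' x < f i x := ((hmemU E x).1 hxE i hiE).2 i' hi'E
    have b : f i x < f i' x := ((hmemU E' x).1 hxE' i' hi'E').2 i hiE'
    exact absurd (a.trans b) (lt_irrefl _)
  have hUsub : ∀ (E : Finset ι) (i : ι), i ∈ E → U E ⊆ (i : Set X) := by
    intro E i hi x hx
    exact hpos_mem i x ((hmemU E x).1 hx i hi).1
  -- coverage by sets of small index cardinality
  have hScover : ∀ x : X, ∃ E : Finset ι, E.Nonempty ∧ E.card ≤ d + 1 ∧ x ∈ U E := by
    intro x
    set E := Finset.univ.filter (fun i : ι => 0 < f i x) with hE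
    have hmemE : ∀ i : ι, i ∈ E ↔ 0 < f i x := by simp [hE]
    refine ⟨E, ?_, ?_, ?_⟩
    · by_contra h
      rw [Finset.not_nonempty_iff_eq_empty] at h
      have hzero : ∀ i : ι, f i x = 0 := by
        intro i
        have h1 := f.nonneg i x
        have hni : ¬ 0 < f i x := fun hp => by
          have := (hmemE i).2 hp
          simp [h] at this
        linarith [not_lt.1 hni]
      have hsum := f.sum_eq_one (mem_univ x)
      rw [finsum_eq_sum_of_fintype] at hsum
      simp [hzero] at hsum
    · have hx := h𝒜ord x
      have hset : {W : Set X | W ∈ 𝒜 ∧ x ∈ W} = ↑(𝒜.filter (fun W => x ∈ W)) := by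
        ext W; simp
      rw [hset, Set.ncard_coe_finset] at hx
      have hsub : E.image (fun i : ι => (i : Set X)) ⊆ 𝒜.filter (fun W => x ∈ W) := by
        intro W hW
        simp only [Finset.mem_image] at hW
        obtain ⟨i, hiE, rfl⟩ := hW
        exact Finset.mem_filter.2 ⟨i.2, hpos_mem i x ((hmemE i).1 hiE)⟩
      calc E.card = (E.image (fun i : ι => (i : Set X))).card :=
            (Finset.card_image_of_injective E Subtype.coe_injective).symm
        _ ≤ (𝒜.filter (fun W => x ∈ W)).card := Finset.card_le_card hsub
        _ ≤ d + 1 := hx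
    · rw [hmemU]
      intro i hi
      refine ⟨(hmemE i).1 hi, fun j hj => ?_⟩
      have hj0 : ¬ 0 < f j x := fun h => hj ((hmemE j).2 h)
      have := f.nonneg j x
      have hipos := (hmemE i).1 hi
      linarith [not_lt.1 hj0]
  -- choose a target element of 𝒱 for every nonempty E
  have hgex : ∀ E : Finset ι, ∃ V, (E.Nonempty → V ∈ 𝒱 ∧ U E ⊆ V) := by
    intro E
    by_cases hE : E.Nonempty
    · obtain ⟨i, hi⟩ := hE
      obtain ⟨V, hV, hsub⟩ := h𝒜ref (i : Set X) i.2
      exact ⟨V, fun _ => ⟨hV, (hUsub E i hi).trans hsub⟩⟩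
    · exact ⟨∅, fun h => absurd h hE⟩
  choose g hgspec using hgex
  -- the merged coloured sets
  set M : Fin (d + 1) → Set X → Set X := fun k V =>
    ⋃ E ∈ Finset.univ.filter (fun E : Finset ι => E.card = (k : ℕ) + 1 ∧ g E = V), U E with hM
  have hmemM : ∀ (k : Fin (d + 1)) (V : Set X) (x : X),
      x ∈ M k V ↔ ∃ E : Finset ι, (E.card = (k : ℕ) + 1 ∧ g E = V) ∧ x ∈ U E := by
    intro k V x
    simp [hM]
  have hMopen : ∀ k V, IsOpen (M k V) := fun k V =>
    isOpen_biUnion fun E _ => hUopen E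
  have hMsub : ∀ k V, M k V ⊆ V := by
    intro k V x hx
    obtain ⟨E, ⟨hcard, hgE⟩, hxE⟩ := (hmemM k V x).1 hx
    have hEne : E.Nonempty := Finset.card_pos.1 (by omega)
    exact hgE ▸ ((hgspec E hEne).2 hxE)
  set fcol : Fin (d + 1) → Finset (Set X) := fun k => 𝒱.image (M k) with hfcol
  set 𝒲 : Finset (Set X) := Finset.univ.biUnion fcol with h𝒲
  have h𝒲mem : ∀ W, W ∈ 𝒲 ↔ ∃ k : Fin (d + 1), ∃ V ∈ 𝒱, M k V = W := by
    intro W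
    simp [h𝒲, hfcol]
  have hcov : ⋃₀ (𝒲 : Set (Set X)) = univ := by
    rw [eq_univ_iff_forall]
    intro x
    obtain ⟨E, hEne, hEcard, hxE⟩ := hScover x
    have hEpos : 0 < E.card := Finset.card_pos.2 hEne
    set k : Fin (d + 1) := ⟨E.card - 1, by omega⟩ with hk
    have hcard : E.card = (k : ℕ) + 1 := by
      simp only [hk]
      omega
    have hxM : x ∈ M k (g E) := (hmemM _ _ x).2 ⟨E, ⟨hcard, rfl⟩, hxE⟩
    exact Set.mem_sUnion.2 ⟨M k (g E),
      Finset.mem_coe.2 ((h𝒲mem _).2 ⟨k, g E, (hgspec E hEne).1, rfl⟩), hxM⟩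
  have href : CoverRefines 𝒲 𝒱 := by
    intro W hW
    obtain ⟨k, V, hV, rfl⟩ := (h𝒲mem W).1 hW
    exact ⟨V, hV, hMsub k V⟩
  have hcol : IsColoured (d + 1) 𝒲 := by
    refine ⟨fcol, ?_, ?_⟩
    · ext W
      simp [h𝒲]
    · intro k A hA B hB hne
      simp only [hfcol, Finset.mem_image] at hA hB
      obtain ⟨V, hV, rfl⟩ := hA
      obtain ⟨V', hV', rfl⟩ := hB
      rw [Set.disjoint_left]
      intro x hxA hxB
      obtain ⟨E, ⟨hc, hg1⟩, hxE⟩ := (hmemM k V x).1 hxA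
      obtain ⟨E', ⟨hc', hg2⟩, hxE'⟩ := (hmemM k V' x).1 hxB
      have hEE : E ≠ E' := by
        rintro rfl
        have hVV : V = V' := by rw [← hg1, hg2]
        exact hne (by rw [hVV])
      exact (Set.disjoint_left.1 (hUdisj E E' (hc.trans hc'.symm) hEE)) hxE hxE'
  have hcard : 𝒲.card ≤ (d + 1) * 𝒱.card := by
    calc 𝒲.card ≤ ∑ k : Fin (d + 1), (fcol k).card := Finset.card_biUnion_le
      _ ≤ ∑ _k : Fin (d + 1), 𝒱.card := Finset.sum_le_sum fun k _ => Finset.card_image_le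
      _ = (d + 1) * 𝒱.card := by simp [Finset.sum_const, mul_comm]
  refine ⟨𝒲, ⟨?_, hcov⟩, href, hcol, hcard⟩
  intro W hW
  obtain ⟨k, V, hV, rfl⟩ := (h𝒲mem W).1 hW
  exact hMopen k V
end

section
/- Let X be a nonempty compact metric space with finite covering dimension d, and let T : X → X be a homeomorphism. Then the coloured topological entropy of T is at most the topological entropy of T: h_{top,c}(T) ≤ h_{top}(T). -/
/-!
Let `𝒜` be an open refinement of `𝒱` of order at most `d + 1` and write `g_A x` for the distance
from `x` to `Aᶜ`. For `S ⊆ 𝒜`, the cell of `S` consists of the points of `⋂ S` at which every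
`g_A` with `A ∈ S` exceeds every `g_B` with `B ∈ 𝒜 \ S`. Cells of two distinct sets `S`, `S'` of
the same size are disjoint (compare `g` at some `A ∈ S \ S'` and `B ∈ S' \ S`), and `x` lies in the
cell of `{A ∈ 𝒜 | x ∈ A}`, a set of size at most `d + 1`. Grouping the cells by size and by a
member of `𝒱` containing them yields a `(d + 1)`-coloured open refinement of `𝒱` with at most
`(d + 1) |𝒱|` members. Hence `N_c ≤ (d + 1) N` for every finite open cover, and the constant
factor `d + 1` does not affect exponential growth rates.
-/

open Set
open scoped ENNReal

variable {X : Type*}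

open Set Filter Metric Topology

section Cells

variable [PseudoEMetricSpace X] {𝒜 S S' : Finset (Set X)} {σ : Finset (Set X) → Set X}
  {k : ℕ} {V V' : Set X} {x : X}

def barycentricCell (𝒜 S : Finset (Set X)) : Set X :=
  ⋂ A ∈ S, (A ∩ ⋂ B ∈ 𝒜, ⋂ _ : B ∉ S, {x | infEDist x Bᶜ < infEDist x Aᶜ})

lemma mem_barycentricCell :
    x ∈ barycentricCell 𝒜 S ↔ ∀ A ∈ S, x ∈ A ∧ ∀ B ∈ 𝒜, B ∉ S → infEDist x Bᶜ < infEDist x Aᶜ := by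
  simp [barycentricCell]

lemma isOpen_barycentricCell (hS : ∀ A ∈ S, IsOpen A) : IsOpen (barycentricCell 𝒜 S) :=
  isOpen_biInter_finset fun A hA => (hS A hA).inter <| isOpen_biInter_finset fun _ _ =>
    isOpen_iInter_of_finite fun _ => isOpen_lt continuous_infEDist continuous_infEDist

lemma disjoint_barycentricCell (hcard : S.card = S'.card) (hne : S ≠ S') (hS : S ⊆ 𝒜)
    (hS' : S' ⊆ 𝒜) : Disjoint (barycentricCell 𝒜 S) (barycentricCell 𝒜 S') := by
  obtain ⟨A, hAS, hAS'⟩ :=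
    Finset.not_subset.1 fun h => hne (Finset.eq_of_subset_of_card_le h hcard.ge)
  obtain ⟨B, hBS', hBS⟩ :=
    Finset.not_subset.1 fun h => hne (Finset.eq_of_subset_of_card_le h hcard.le).symm
  exact Set.disjoint_left.2 fun x hx hx' =>
    lt_asymm ((mem_barycentricCell.1 hx A hAS).2 B (hS' hBS') hBS)
      ((mem_barycentricCell.1 hx' B hBS').2 A (hS hAS) hAS')

lemma mem_barycentricCell_of_forall (hS : ∀ A ∈ S, IsOpen A ∧ x ∈ A)
    (hS𝒜 : ∀ B ∈ 𝒜, B ∉ S → x ∉ B) : x ∈ barycentricCell 𝒜 S := by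
  refine mem_barycentricCell.2 fun A hA => ⟨(hS A hA).2, fun B hB hBS => ?_⟩
  rw [infEDist_zero_of_mem (Set.mem_compl (hS𝒜 B hB hBS)), infEDist_pos_iff_notMem_closure,
    closure_compl, (hS A hA).1.interior_eq, Set.notMem_compl_iff]
  exact (hS A hA).2

lemma exists_mem_barycentricCell (h𝒜 : IsFinOpenCover 𝒜) (x : X) :
    ∃ S ⊆ 𝒜, S.Nonempty ∧ (S : Set (Set X)) = {A | A ∈ 𝒜 ∧ x ∈ A} ∧
      x ∈ barycentricCell 𝒜 S := by
  classical
  obtain ⟨A, hA, hxA⟩ := h𝒜.2.symm ▸ mem_univ x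
  refine ⟨𝒜.filter (x ∈ ·), Finset.filter_subset _ _, ⟨A, Finset.mem_filter.2 ⟨hA, hxA⟩⟩,
    by ext; simp, mem_barycentricCell_of_forall (fun B hB => ?_) fun B hB hBS hxB => ?_⟩
  · exact ⟨h𝒜.1 B (Finset.mem_filter.1 hB).1, (Finset.mem_filter.1 hB).2⟩
  · exact hBS (Finset.mem_filter.2 ⟨hB, hxB⟩)

def cellClass (𝒜 : Finset (Set X)) (σ : Finset (Set X) → Set X) (k : ℕ) (V : Set X) : Set X :=
  ⋃ (S : Finset (Set X)) (_ : S ⊆ 𝒜 ∧ S.card = k ∧ σ S = V), barycentricCell 𝒜 S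

lemma subset_cellClass (hS : S ⊆ 𝒜) : barycentricCell 𝒜 S ⊆ cellClass 𝒜 σ S.card (σ S) :=
  Set.subset_iUnion₂_of_subset S ⟨hS, rfl, rfl⟩ subset_rfl

lemma isOpen_cellClass (h𝒜 : ∀ A ∈ 𝒜, IsOpen A) : IsOpen (cellClass 𝒜 σ k V) :=
  isOpen_iUnion fun _ => isOpen_iUnion fun hS => isOpen_barycentricCell fun A hA => h𝒜 A (hS.1 hA)

lemma disjoint_cellClass (hV : V ≠ V') : Disjoint (cellClass 𝒜 σ k V) (cellClass 𝒜 σ k V') := by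
  simp only [cellClass, Set.disjoint_iUnion_right, Set.disjoint_iUnion_left]
  rintro S' ⟨hS', hS'k, rfl⟩ S ⟨hS, hSk, rfl⟩
  exact disjoint_barycentricCell (hSk.trans hS'k.symm) (fun h => hV (h ▸ rfl)) hS hS'

lemma cellClass_succ_subset (hσ : ∀ S ⊆ 𝒜, S.Nonempty → barycentricCell 𝒜 S ⊆ σ S) :
    cellClass 𝒜 σ (k + 1) V ⊆ V :=
  Set.iUnion₂_subset fun S ⟨hS, hSk, hSV⟩ =>
    hSV ▸ hσ S hS (Finset.card_pos.1 (hSk ▸ k.succ_pos))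

end Cells

theorem exists_coloured_refinement_card_le [PseudoEMetricSpace X] {d : ℕ}
    {𝒜 𝒱 : Finset (Set X)} (h𝒜 : IsFinOpenCover 𝒜) (href : CoverRefines 𝒜 𝒱)
    (hord : ∀ x : X, {A : Set X | A ∈ 𝒜 ∧ x ∈ A}.ncard ≤ d + 1) :
    ∃ 𝒲 : Finset (Set X), IsFinOpenCover 𝒲 ∧ CoverRefines 𝒲 𝒱 ∧ IsColoured (d + 1) 𝒲 ∧
      𝒲.card ≤ (d + 1) * 𝒱.card := by
  classical
  choose! u hu𝒱 hu using href
  choose! rep hrep using fun (S : Finset (Set X)) (hS : S.Nonempty) => hS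
  set σ : Finset (Set X) → Set X := fun S => u (rep S)
  have hσ : ∀ S ⊆ 𝒜, S.Nonempty → barycentricCell 𝒜 S ⊆ σ S := fun S hS hne x hx =>
    hu _ (hS (hrep S hne)) ((mem_barycentricCell.1 hx _ (hrep S hne)).1)
  set f : Fin (d + 1) → Finset (Set X) := fun i => 𝒱.image (cellClass 𝒜 σ (i + 1))
  have hcover : ∀ x : X, ∃ i : Fin (d + 1), ∃ V ∈ 𝒱, x ∈ cellClass 𝒜 σ (i + 1) V := by
    intro x
    obtain ⟨S, hS𝒜, hSne, hS, hx⟩ := exists_mem_barycentricCell h𝒜 x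
    have hScard : S.card ≤ d + 1 := by rw [← Set.ncard_coe_finset, hS]; exact hord x
    obtain ⟨k, hk⟩ := Nat.exists_eq_add_one_of_ne_zero (Finset.card_ne_zero.2 hSne)
    exact ⟨⟨k, by omega⟩, σ S, hu𝒱 _ (hS𝒜 (hrep S hSne)), hk ▸ subset_cellClass hS𝒜 hx⟩
  refine ⟨Finset.univ.biUnion f, ⟨?_, ?_⟩, ?_, ⟨f, rfl, ?_⟩, ?_⟩
  · simp only [Finset.mem_biUnion, Finset.mem_image, f]
    rintro _ ⟨i, -, V, -, rfl⟩
    exact isOpen_cellClass h𝒜.1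
  · refine Set.eq_univ_of_forall fun x => ?_
    obtain ⟨i, V, hV, hx⟩ := hcover x
    exact ⟨_, by simpa [f] using ⟨i, V, hV, rfl⟩, hx⟩
  · simp only [CoverRefines, Finset.mem_biUnion, Finset.mem_image, f]
    rintro _ ⟨i, -, V, hV, rfl⟩
    exact ⟨V, hV, cellClass_succ_subset hσ⟩
  · simp only [Finset.mem_image, f]
    rintro i _ ⟨V, -, rfl⟩ _ ⟨V', -, rfl⟩ hne
    exact disjoint_cellClass fun h => hne (h ▸ rfl)
  · calc (Finset.univ.biUnion f).card ≤ ∑ i, (f i).card := Finset.card_biUnion_le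
      _ ≤ ∑ _i : Fin (d + 1), 𝒱.card := Finset.sum_le_sum fun i _ => Finset.card_image_le
      _ = (d + 1) * 𝒱.card := by simp

lemma exists_subcover_card_eq_coverMin [TopologicalSpace X] {𝒰 : Finset (Set X)}
    (h𝒰 : ⋃₀ (𝒰 : Set (Set X)) = univ) :
    ∃ 𝒱 ⊆ 𝒰, ⋃₀ (𝒱 : Set (Set X)) = univ ∧ 𝒱.card = coverMin 𝒰 :=
  Nat.sInf_mem (s := {k | ∃ 𝒱 ⊆ 𝒰, ⋃₀ (𝒱 : Set (Set X)) = univ ∧ 𝒱.card = k})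
    ⟨𝒰.card, 𝒰, subset_rfl, h𝒰, rfl⟩

theorem colouredMin_le_mul_coverMin [PseudoEMetricSpace X] {d : ℕ} (hdim : CoveringDimLE X d)
    {𝒰 : Finset (Set X)} (h𝒰 : IsFinOpenCover 𝒰) :
    colouredMin d 𝒰 ≤ (d + 1) * coverMin 𝒰 := by
  obtain ⟨𝒱, h𝒱𝒰, h𝒱, h𝒱card⟩ := exists_subcover_card_eq_coverMin h𝒰.2
  obtain ⟨𝒜, h𝒜, h𝒜𝒱, hord⟩ := hdim 𝒱 ⟨fun V hV => h𝒰.1 V (h𝒱𝒰 hV), h𝒱⟩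
  obtain ⟨𝒲, h𝒲, h𝒲𝒱, hcol, hcard⟩ := exists_coloured_refinement_card_le h𝒜 h𝒜𝒱 hord
  have h𝒲𝒰 : CoverRefines 𝒲 𝒰 := fun W hW =>
    (h𝒲𝒱 W hW).imp fun _ hV => ⟨h𝒱𝒰 hV.1, hV.2⟩
  calc colouredMin d 𝒰 ≤ 𝒲.card := Nat.sInf_le ⟨𝒲, h𝒲, h𝒲𝒰, hcol, rfl⟩
    _ ≤ (d + 1) * coverMin 𝒰 := h𝒱card ▸ hcard

lemma IsFinOpenCover.dynCover [TopologicalSpace X] {T : X → X} (hT : Continuous T)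
    {𝒰 : Finset (Set X)} (h𝒰 : IsFinOpenCover 𝒰) (n : ℕ) :
    IsFinOpenCover (dynCover T 𝒰 n) := by
  classical
  induction n with
  | zero => simp [IsFinOpenCover, _root_.dynCover]
  | succ n ih =>
    simp only [IsFinOpenCover, _root_.dynCover, Finset.mem_image, Finset.mem_product, Prod.exists]
    refine ⟨?_, Set.eq_univ_of_forall fun x => ?_⟩
    · rintro _ ⟨A, B, ⟨hA, hB⟩, rfl⟩
      exact (h𝒰.1 A hA).inter ((ih.1 B hB).preimage hT)
    · obtain ⟨A, hA, hxA⟩ := h𝒰.2.symm ▸ mem_univ x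
      obtain ⟨B, hB, hxB⟩ := ih.2.symm ▸ mem_univ (T x)
      exact ⟨A ∩ T ⁻¹' B, by simpa using ⟨A, B, ⟨hA, hB⟩, rfl⟩, hxA, hxB⟩

lemma Real.log_natCast_le_log_add_log_of_le_mul {a b c : ℕ} (h : a ≤ c * b) :
    Real.log a ≤ Real.log c + Real.log b := by
  rcases a.eq_zero_or_pos with rfl | ha
  · simpa using add_nonneg (Real.log_natCast_nonneg c) (Real.log_natCast_nonneg b)
  have hcb : 0 < c * b := ha.trans_le h
  rw [← Real.log_mul (by simp [Nat.pos_of_mul_pos_right hcb |>.ne'])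
    (by simp [Nat.pos_of_mul_pos_left hcb |>.ne'])]
  exact Real.log_le_log (by exact_mod_cast ha) (by exact_mod_cast h)

theorem limsup_ofReal_log_div_le_of_le_mul {a b : ℕ → ℕ} (c : ℕ) (h : ∀ n, a n ≤ c * b n) :
    atTop.limsup (fun n : ℕ => ENNReal.ofReal (Real.log (a n) / n)) ≤
      atTop.limsup (fun n : ℕ => ENNReal.ofReal (Real.log (b n) / n)) := by
  have hc : Tendsto (fun n : ℕ => ENNReal.ofReal (Real.log c / n)) atTop (𝓝 0) :=
    ENNReal.ofReal_zero ▸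
      (ENNReal.continuous_ofReal.tendsto 0).comp (tendsto_const_div_atTop_nhds_zero_nat _)
  calc atTop.limsup (fun n : ℕ => ENNReal.ofReal (Real.log (a n) / n))
      ≤ atTop.limsup ((fun n : ℕ => ENNReal.ofReal (Real.log c / n)) +
          fun n : ℕ => ENNReal.ofReal (Real.log (b n) / n)) := by
        refine limsup_le_limsup (Eventually.of_forall fun n => ?_)
        refine (ENNReal.ofReal_le_ofReal ?_).trans ENNReal.ofReal_add_le
        rw [← add_div]
        exact div_le_div_of_nonneg_right (Real.log_natCast_le_log_add_log_of_le_mul (h n))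
          n.cast_nonneg
    _ = _ := ENNReal.limsup_add_of_left_tendsto_zero hc _

theorem colouredEntropy_le_topEntropy_general
    {X : Type*} [MetricSpace X] (d : ℕ)
    (hdim : CoveringDimLE X d) (T : X ≃ₜ X) :
    colouredEntropy d (⇑T) ≤ topEntropy (⇑T) :=
  iSup₂_mono fun _ h𝒰 => limsup_ofReal_log_div_le_of_le_mul (d + 1) fun n =>
    colouredMin_le_mul_coverMin hdim (h𝒰.dynCover T.continuous n)

/-- For a homeomorphism `T` of a nonempty compact metric space of finite
covering dimension `d`, the coloured topological entropy is at most the topological entropy. -/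
theorem colouredEntropy_le_topEntropy
    {X : Type*} [MetricSpace X] [CompactSpace X] [Nonempty X] (d : ℕ)
    (hdim : CoveringDimLE X d) (T : X ≃ₜ X) :
    colouredEntropy d (⇑T) ≤ topEntropy (⇑T) :=
  colouredEntropy_le_topEntropy_general d hdim T
end

section
/- Let A be a C*-algebra with an automorphism α and finite subset ℱ. For each n, set ℱₙ = ℱ ∪ α(ℱ) ∪ … ∪ α^{n-1}(ℱ). If r : FiniteSubsets(A) × ℝ₊ → ℝ₊ is a rank function satisfying r(α(𝒢), ε) = r(𝒢, ε) for all finite 𝒢 and ε > 0, then limsup_{n→∞} (1/n) log r(ℱ ∪ α⁻¹(ℱ) ∪ … ∪ α^{-(n-1)}(ℱ), ε) = limsup_{n→∞} (1/n) log r(ℱₙ, ε). Consequently the associated entropy of α equals that of α⁻¹. -/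
/-- The set `ℱ ∪ f(ℱ) ∪ … ∪ f^{n-1}(ℱ)`. -/
noncomputable def orbitSet {A : Type*} (f : A → A) (ℱ : Finset A) (n : ℕ) : Finset A :=
  letI := Classical.decEq A
  (Finset.range n).biUnion fun j => ℱ.image (f^[j])

/-- The exponential growth rate of a rank function `r` along the orbit of `ℱ` under `f`. -/
noncomputable def rankEntropyOn {A : Type*} (r : Finset A → ℝ → ℝ) (f : A → A)
    (ℱ : Finset A) (ε : ℝ) : EReal :=
  Filter.atTop.limsup fun n : ℕ => ((Real.log (r (orbitSet f ℱ n) ε) / n : ℝ) : EReal)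

/-- The entropy associated to a rank function `r` and a map `f`:
`h(f) = sup_ℱ sup_{ε>0} limsup_n (1/n) log r(ℱ ∪ f(ℱ) ∪ … ∪ f^{n-1}(ℱ), ε)`. -/
noncomputable def rankEntropy {A : Type*} (r : Finset A → ℝ → ℝ) (f : A → A) : EReal :=
  ⨆ (ℱ : Finset A), ⨆ (ε : ℝ) (_ : 0 < ε), rankEntropyOn r f ℱ ε

/-- A rank function: monotone in the finite set and antitone in the tolerance. -/
def IsRankFn {A : Type*} (r : Finset A → ℝ → ℝ) : Prop :=
  (∀ ε : ℝ, 0 < ε → ∀ 𝒢 𝒢' : Finset A, 𝒢 ⊆ 𝒢' → r 𝒢 ε ≤ r 𝒢' ε) ∧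
  (∀ 𝒢 : Finset A, ∀ ε ε' : ℝ, 0 < ε → ε ≤ ε' → r 𝒢 ε' ≤ r 𝒢 ε)

/-- Auxiliary: the backward orbit set is the image of the forward orbit set under `g^[n-1]`. -/
lemma orbitSet_symm_eq {A : Type*} [DecidableEq A] (f g : A → A)
    (hgf : Function.LeftInverse g f)
    (ℱ : Finset A) (n : ℕ) (hn : 1 ≤ n) :
    orbitSet g ℱ n = (orbitSet f ℱ n).image (g^[n-1]) := by
  unfold orbitSet
  ext x
  simp only [Finset.mem_image, Finset.mem_biUnion, Finset.mem_range]
  constructor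
  · rintro ⟨j, hj, a, ha, rfl⟩
    obtain ⟨k, hk⟩ : ∃ k, n - 1 = j + k := ⟨n-1-j, by omega⟩
    refine ⟨f^[k] a, ⟨k, by omega, a, ha, rfl⟩, ?_⟩
    rw [hk, Function.iterate_add_apply]
    congr 1
    exact hgf.iterate k a
  · rintro ⟨y, ⟨j, hj, a, ha, rfl⟩, rfl⟩
    obtain ⟨k, hk⟩ : ∃ k, n - 1 = k + j := ⟨n-1-j, by omega⟩
    refine ⟨k, by omega, a, ha, ?_⟩
    rw [hk, Function.iterate_add_apply]
    congr 1
    exact (hgf.iterate j a).symm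

/-- If a rank function `r` on finite subsets of a C*-algebra `A` is invariant
under an automorphism `α`, then for every finite set `ℱ` and `ε > 0` the growth rates of `r`
along the backward and forward orbits coincide; consequently the associated entropy of `α⁻¹`
equals that of `α`. -/

theorem rankEntropy_inv
    {A : Type*} [NormedRing A] [StarRing A] [CStarRing A] [NormedAlgebra ℂ A]
    [CompleteSpace A] [StarModule ℂ A] [DecidableEq A]
    (α : A ≃⋆ₐ[ℂ] A) (r : Finset A → ℝ → ℝ)
    (hr : ∀ (𝒢 : Finset A) (ε : ℝ), 0 < ε → r (𝒢.image ⇑α) ε = r 𝒢 ε) :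
    (∀ (ℱ : Finset A) (ε : ℝ), 0 < ε →
        rankEntropyOn r (⇑α.symm) ℱ ε = rankEntropyOn r (⇑α) ℱ ε) ∧
      rankEntropy r (⇑α.symm) = rankEntropy r (⇑α) := by
  have hsymm : ∀ (𝒢 : Finset A) (ε : ℝ), 0 < ε → r (𝒢.image ⇑α.symm) ε = r 𝒢 ε := by
    intro 𝒢 ε hε
    have h := hr (𝒢.image ⇑α.symm) ε hε
    rw [Finset.image_image, show (⇑α ∘ ⇑α.symm) = id from funext α.apply_symm_apply,
      Finset.image_id] at h
    exact h.symm
  have hiter : ∀ (k : ℕ) (𝒢 : Finset A) (ε : ℝ), 0 < ε →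
      r (𝒢.image (⇑α.symm)^[k]) ε = r 𝒢 ε := by
    intro k
    induction k with
    | zero => intro 𝒢 ε hε; simp
    | succ k ih =>
      intro 𝒢 ε hε
      rw [Function.iterate_succ', ← Finset.image_image, hsymm _ _ hε, ih _ _ hε]
  have key : ∀ (ℱ : Finset A) (ε : ℝ), 0 < ε →
      rankEntropyOn r (⇑α.symm) ℱ ε = rankEntropyOn r (⇑α) ℱ ε := by
    intro ℱ ε hε
    unfold rankEntropyOn
    congr 1
    funext n
    rcases Nat.eq_zero_or_pos n with h | h
    · subst h; simp [orbitSet]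
    · rw [orbitSet_symm_eq (⇑α) (⇑α.symm) α.symm_apply_apply ℱ n h,
        hiter _ _ _ hε]
  refine ⟨key, ?_⟩
  unfold rankEntropy
  refine iSup_congr fun ℱ => iSup_congr fun ε => iSup_congr fun hε => key ℱ ε hε
end

section
/- Let A be a C*-algebra with finite nuclear dimension and let α be an automorphism of A. Then ht_nuc(α^k) = |k| · ht_nuc(α) for every integer k. -/
open scoped Matrix Matrix.Norms.L2Operator

/-- A linear map between complex star algebras is completely positive if each matrix
amplification sends positive matrices (those of the form `Nᴴ * N`) to positive matrices. -/
def IsCompletelyPositive {A B : Type*} [Ring A] [Ring B] [Algebra ℂ A] [Algebra ℂ B]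
    [StarRing A] [StarRing B] (φ : A →ₗ[ℂ] B) : Prop :=
  ∀ (n : ℕ) (M : Matrix (Fin n) (Fin n) A), (∃ N, M = Nᴴ * N) →
    ∃ N', M.map ⇑φ = N'ᴴ * N'

/-- A map is order zero if it preserves orthogonality of positive elements. -/
def IsOrderZero {F A : Type*} [NonUnitalRing F] [Star F] [NonUnitalRing A] [Star A]
    (φ : F → A) : Prop :=
  ∀ x y : F, (∃ c, x = star c * c) → (∃ c, y = star c * c) → x * y = 0 → φ x * φ y = 0

/-- `IsDecomposableRank d ℱ ε k` asserts the existence of a `(d, ℱ, ε)`-decomposable system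
whose finite-dimensional algebra (a direct sum of `d+1` coloured summands, each a direct sum
of matrix algebras) has rank `k`, with the downward map completely positive contractive and
the upward map a sum of `d+1` completely positive contractive order zero maps. -/
def IsDecomposableRank {A : Type*} [Ring A] [StarRing A] [Algebra ℂ A] [Norm A]
    (d : ℕ) (ℱ : Finset A) (ε : ℝ) (k : ℕ) : Prop :=
  ∃ (m : Fin (d + 1) → ℕ) (sz : (i : Fin (d + 1)) → Fin (m i) → ℕ)
    (ψ : A →ₗ[ℂ] ((i : Fin (d + 1)) → (j : Fin (m i)) →
        Matrix (Fin (sz i j)) (Fin (sz i j)) ℂ))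
    (φ : (i : Fin (d + 1)) → (((j : Fin (m i)) →
        Matrix (Fin (sz i j)) (Fin (sz i j)) ℂ) →ₗ[ℂ] A)),
    IsCompletelyPositive ψ ∧
    (∀ a : A, ∀ i j, ‖ψ a i j‖ ≤ ‖a‖) ∧
    (∀ i, IsCompletelyPositive (φ i) ∧ IsOrderZero ⇑(φ i) ∧
      ∀ x, (∀ j, ‖x j‖ ≤ 1) → ‖φ i x‖ ≤ 1) ∧
    (∀ a ∈ ℱ, ‖(∑ i, φ i (ψ a i)) - a‖ ≤ ε) ∧
    k = ∑ i, ∑ j, sz i j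

/-- The `(d, ℱ, ε)`-decomposable rank `r_nuc(d, ℱ, ε)`. -/
noncomputable def rNuc {A : Type*} [Ring A] [StarRing A] [Algebra ℂ A] [Norm A]
    (d : ℕ) (ℱ : Finset A) (ε : ℝ) : ℕ :=
  sInf {k | IsDecomposableRank d ℱ ε k}

/-- `A` has nuclear dimension at most `d`. -/
def NucDimLE (A : Type*) [Ring A] [StarRing A] [Algebra ℂ A] [Norm A] (d : ℕ) : Prop :=
  ∀ (ℱ : Finset A) (ε : ℝ), 0 < ε → ∃ k, IsDecomposableRank d ℱ ε k

/-- The coloured entropy `ht_nuc` (relative to the dimension parameter `d`). -/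
noncomputable def htNuc {A : Type*} [Ring A] [StarRing A] [Algebra ℂ A] [Norm A]
    (d : ℕ) (f : A → A) : EReal :=
  ⨆ (ℱ : Finset A), ⨆ (ε : ℝ) (_ : 0 < ε),
    Filter.atTop.limsup fun n : ℕ =>
      ((Real.log (rNuc d (orbitSet f ℱ n) ε) / n : ℝ) : EReal)

/-! Automorphisms of a C*-algebra are isometric, so transporting a decomposable system along
one, `β`, gives a system of the same rank for the image set: `r_nuc(d, β(𝒢), ε) = r_nuc(d, 𝒢, ε)`.
Once every set admits a decomposable system, `r_nuc` is also monotone in the set.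

For `k > 0`, the `α^k`-orbit of `ℱ` up to time `n` lies in the `α`-orbit of `ℱ` up to time
`k n`, and the `α^k`-orbit of `ℱ ∪ … ∪ α^{k-1}(ℱ)` up to time `n` equals it. As
`n ↦ log r_nuc(orbit up to time n)` is monotone, its growth rate along the multiples of `k`
is the full growth rate, which gives `ht_nuc(α^k) = k · ht_nuc(α)`. The `α⁻¹`-orbit of `ℱ` up
to time `n + 1` is the image of the `α`-orbit under `α^{-n}`, so it has the same rank, and
`ht_nuc(α⁻¹) = ht_nuc(α)`.
-/

open Filter Topology

section OrbitSet

variable {A : Type*}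

lemma mem_orbitSet {f : A → A} {F : Finset A} {n : ℕ} {x : A} :
    x ∈ orbitSet f F n ↔ ∃ j < n, ∃ b ∈ F, f^[j] b = x := by
  classical
  simp [orbitSet, eq_comm]

lemma orbitSet_mono (f : A → A) (F : Finset A) : Monotone (orbitSet f F) := by
  intro n m h x hx
  obtain ⟨j, hj, b, hb, rfl⟩ := mem_orbitSet.1 hx
  exact mem_orbitSet.2 ⟨j, hj.trans_le h, b, hb, rfl⟩

lemma orbitSet_id (F : Finset A) {n : ℕ} (hn : 0 < n) : orbitSet id F n = F := by
  ext x
  rw [mem_orbitSet]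
  exact ⟨fun ⟨_, _, b, hb, hbx⟩ => by simpa [← hbx] using hb, fun hx => ⟨0, hn, x, hx, rfl⟩⟩

lemma orbitSet_iterate_subset (f : A → A) (F : Finset A) {K : ℕ} (hK : 0 < K) (n : ℕ) :
    orbitSet (f^[K]) F n ⊆ orbitSet f F (K * n) := by
  intro x hx
  obtain ⟨j, hj, b, hb, rfl⟩ := mem_orbitSet.1 hx
  exact mem_orbitSet.2
    ⟨K * j, Nat.mul_lt_mul_of_pos_left hj hK, b, hb, Function.iterate_mul f K j ▸ rfl⟩

lemma orbitSet_iterate_orbitSet (f : A → A) (F : Finset A) {K : ℕ} (hK : 0 < K) (n : ℕ) :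
    orbitSet (f^[K]) (orbitSet f F K) n = orbitSet f F (K * n) := by
  ext x
  simp only [mem_orbitSet]
  constructor
  · rintro ⟨i, hi, _, ⟨j, hj, b, hb, rfl⟩, rfl⟩
    refine ⟨K * i + j, ?_, b, hb, by rw [Function.iterate_add_apply, Function.iterate_mul]⟩
    nlinarith
  · rintro ⟨j, hj, b, hb, rfl⟩
    refine ⟨j / K, Nat.div_lt_of_lt_mul hj, f^[j % K] b, ⟨j % K, Nat.mod_lt j hK, b, hb, rfl⟩, ?_⟩
    rw [← Function.iterate_mul, ← Function.iterate_add_apply, Nat.div_add_mod]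

lemma orbitSet_of_leftInverse [DecidableEq A] {f g : A → A} (hfg : Function.LeftInverse g f)
    (F : Finset A) (n : ℕ) :
    orbitSet g F (n + 1) = (orbitSet f F (n + 1)).image (g^[n]) := by
  ext x
  simp only [Finset.mem_image, mem_orbitSet]
  constructor
  · rintro ⟨j, hj, b, hb, rfl⟩
    refine ⟨f^[n - j] b, ⟨n - j, by omega, b, hb, rfl⟩, ?_⟩
    rw [show n = j + (n - j) by omega, Function.iterate_add_apply, Nat.add_sub_cancel_left,
      hfg.iterate]
  · rintro ⟨_, ⟨j, hj, b, hb, rfl⟩, rfl⟩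
    refine ⟨n - j, by omega, b, hb, ?_⟩
    rw [show n = (n - j) + j by omega, Function.iterate_add_apply, Nat.add_sub_cancel,
      hfg.iterate]

end OrbitSet

lemma limsup_div_le_limsup_comp_mul {a : ℕ → ℝ} (ha : Monotone a) {K : ℕ} (hK : 0 < K) :
    limsup (fun n : ℕ => ((a n / n : ℝ) : EReal)) atTop ≤
      limsup (fun m : ℕ => ((a (K * m) / (K * m : ℕ) : ℝ) : EReal)) atTop := by
  refine EReal.le_of_forall_lt_iff_le.1 fun r hr => ?_
  obtain ⟨M, hM⟩ := eventually_atTop.1 (eventually_lt_of_limsup_lt hr)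
  -- With `m = n / K + 1` we have `n < K * m ≤ n + K`, so `a n ≤ a (K * m) < r K m ≤ r n + |r| K`.
  have hbound : ∀ n ≥ K * M + 1, a n / n ≤ r + |r| * K / n := by
    intro n hn
    set m := n / K + 1
    have hnm : n < K * m := Nat.lt_mul_div_succ n hK
    have hmn : K * m ≤ n + K := by
      have := Nat.mul_div_le n K
      simp only [m, Nat.mul_succ]
      omega
    have hmM : M ≤ m := by
      have : M ≤ n / K := (Nat.le_div_iff_mul_le hK).2 (by nlinarith)
      omega
    have hn0 : (0 : ℝ) < n := by exact_mod_cast (by omega : 0 < n)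
    have hnm' : (n : ℝ) < (K * m : ℕ) := by exact_mod_cast hnm
    have hmn' : ((K * m : ℕ) : ℝ) ≤ n + K := by exact_mod_cast hmn
    have hKm := EReal.coe_lt_coe_iff.1 (hM m hmM)
    rw [div_lt_iff₀ (hn0.trans hnm')] at hKm
    have hgap : r * ((K * m : ℕ) - n) ≤ |r| * K :=
      calc r * ((K * m : ℕ) - n) ≤ |r| * ((K * m : ℕ) - n) :=
            mul_le_mul_of_nonneg_right (le_abs_self r) (by linarith)
        _ ≤ |r| * K := mul_le_mul_of_nonneg_left (by linarith) (abs_nonneg r)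
    rw [div_le_iff₀ hn0, add_mul, div_mul_cancel₀ _ hn0.ne']
    linarith [ha hnm.le]
  have hlim : Tendsto (fun n : ℕ => ((r + |r| * K / n : ℝ) : EReal)) atTop (𝓝 r) := by
    refine (continuous_coe_real_ereal.tendsto r).comp ?_
    simpa using tendsto_const_nhds.add (tendsto_const_div_atTop_nhds_zero_nat (|r| * K))
  calc limsup (fun n : ℕ => ((a n / n : ℝ) : EReal)) atTop
      ≤ limsup (fun n : ℕ => ((r + |r| * K / n : ℝ) : EReal)) atTop :=
        limsup_le_limsup (eventually_atTop.2 ⟨K * M + 1, fun n hn =>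
          EReal.coe_le_coe_iff.2 (hbound n hn)⟩)
    _ = r := hlim.limsup_eq

lemma limsup_comp_mul_div {a : ℕ → ℝ} (ha : Monotone a) {K : ℕ} (hK : 0 < K) :
    limsup (fun n : ℕ => ((a (K * n) / n : ℝ) : EReal)) atTop =
      ((K : ℝ) : EReal) * limsup (fun n : ℕ => ((a n / n : ℝ) : EReal)) atTop := by
  have hscale : ∀ n : ℕ, ((a (K * n) / n : ℝ) : EReal) =
      ((K : ℝ) : EReal) * ((a (K * n) / (K * n : ℕ) : ℝ) : EReal) := by
    intro n
    rw [← EReal.coe_mul]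
    rcases n.eq_zero_or_pos with rfl | hn
    · simp
    · congr 1
      push_cast
      field_simp
  simp_rw [hscale]
  rw [EReal.limsup_const_mul_of_nonneg_of_ne_top (by positivity) (EReal.coe_ne_top _)]
  congr 1
  refine le_antisymm ?_ (limsup_div_le_limsup_comp_mul ha hK)
  have hsub : Tendsto (fun m : ℕ => K * m) atTop atTop :=
    tendsto_atTop_mono (fun m => Nat.le_mul_of_pos_left m hK) tendsto_id
  exact limsup_le_limsup_of_le (u := fun n : ℕ => ((a n / n : ℝ) : EReal)) hsub

section RankEntropy

variable {A : Type*} {r : Finset A → ℝ → ℝ}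

lemma rankEntropyOn_le_rankEntropy (f : A → A) (F : Finset A) {ε : ℝ} (hε : 0 < ε) :
    rankEntropyOn r f F ε ≤ rankEntropy r f :=
  le_iSup_of_le F (le_iSup₂_of_le ε hε le_rfl)

lemma rankEntropyOn_id (F : Finset A) (ε : ℝ) : rankEntropyOn r id F ε = 0 := by
  have hconst : (fun n : ℕ => ((Real.log (r (orbitSet id F n) ε) / n : ℝ) : EReal))
      =ᶠ[atTop] fun n : ℕ => ((Real.log (r F ε) / n : ℝ) : EReal) := by
    filter_upwards [eventually_gt_atTop 0] with n hn
    rw [orbitSet_id F hn]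
  rw [rankEntropyOn, limsup_congr hconst]
  exact ((continuous_coe_real_ereal.tendsto 0).comp
    (tendsto_const_div_atTop_nhds_zero_nat _)).limsup_eq

lemma rankEntropy_id : rankEntropy r (id : A → A) = 0 :=
  le_antisymm (iSup_le fun F => iSup₂_le fun ε _ => (rankEntropyOn_id F ε).le)
    ((rankEntropyOn_id ∅ 1).symm.le.trans (rankEntropyOn_le_rankEntropy id ∅ one_pos))

lemma rankEntropyOn_iterate_le {ε : ℝ} (hr : Monotone fun F => Real.log (r F ε))
    (f : A → A) (F : Finset A) {K : ℕ} (hK : 0 < K) :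
    rankEntropyOn r (f^[K]) F ε ≤ ((K : ℝ) : EReal) * rankEntropyOn r f F ε := by
  refine le_of_le_of_eq ?_ (limsup_comp_mul_div (hr.comp (orbitSet_mono f F)) hK)
  refine limsup_le_limsup (Eventually.of_forall fun n => EReal.coe_le_coe_iff.2 ?_)
  exact div_le_div_of_nonneg_right (hr (orbitSet_iterate_subset f F hK n)) n.cast_nonneg

lemma rankEntropyOn_iterate_orbitSet {ε : ℝ} (hr : Monotone fun F => Real.log (r F ε))
    (f : A → A) (F : Finset A) {K : ℕ} (hK : 0 < K) :
    rankEntropyOn r (f^[K]) (orbitSet f F K) ε = ((K : ℝ) : EReal) * rankEntropyOn r f F ε := by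
  simp only [rankEntropyOn, orbitSet_iterate_orbitSet f F hK]
  exact limsup_comp_mul_div (hr.comp (orbitSet_mono f F)) hK

lemma rankEntropy_iterate (hr : ∀ ε, 0 < ε → Monotone fun F => Real.log (r F ε)) (f : A → A)
    (K : ℕ) : rankEntropy r (f^[K]) = ((K : ℝ) : EReal) * rankEntropy r f := by
  rcases K.eq_zero_or_pos with rfl | hK
  · simp [rankEntropy_id]
  have hK₀ : (0 : EReal) < ((K : ℝ) : EReal) := by exact_mod_cast hK
  refine le_antisymm ?_ ?_
  · refine iSup_le fun F => iSup₂_le fun ε hε =>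
      (rankEntropyOn_iterate_le (hr ε hε) f F hK).trans ?_
    exact mul_le_mul_of_nonneg_left (rankEntropyOn_le_rankEntropy f F hε) hK₀.le
  · have hdiv : ∀ x y : EReal, x ≤ y / ((K : ℝ) : EReal) ↔ x * ((K : ℝ) : EReal) ≤ y :=
      fun _ _ => EReal.le_div_iff_mul_le hK₀ (EReal.coe_ne_top _)
    rw [mul_comm, ← hdiv]
    refine iSup_le fun F => iSup₂_le fun ε hε => (hdiv _ _).2 ?_
    rw [mul_comm, ← rankEntropyOn_iterate_orbitSet (hr ε hε) f F hK]
    exact rankEntropyOn_le_rankEntropy _ _ hε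

lemma rankEntropy_of_leftInverse [DecidableEq A] {f g : A → A} (hfg : Function.LeftInverse g f)
    (hr : ∀ F ε, r (F.image g) ε = r F ε) : rankEntropy r g = rankEntropy r f := by
  have hr_iterate : ∀ n F ε, r (F.image (g^[n])) ε = r F ε := by
    intro n
    induction n with
    | zero => simp
    | succ n ih => intro F ε; rw [Function.iterate_succ', ← Finset.image_image, hr, ih]
  have hOn : ∀ F ε, rankEntropyOn r g F ε = rankEntropyOn r f F ε := by
    refine fun F ε => limsup_congr (eventually_atTop.2 ⟨1, fun n hn => ?_⟩)
    obtain ⟨n, rfl⟩ := Nat.exists_eq_add_of_le' hn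
    rw [orbitSet_of_leftInverse hfg, hr_iterate]
  simp only [rankEntropy, hOn]

end RankEntropy

lemma Matrix.map_conjTranspose_mul_self {m n R S F : Type*} [Fintype m] [NonUnitalSemiring R]
    [StarRing R] [NonUnitalSemiring S] [StarRing S] [FunLike F R S] [NonUnitalRingHomClass F R S]
    [StarHomClass F R S] (φ : F) (N : Matrix m n R) :
    (Nᴴ * N).map φ = (N.map φ)ᴴ * N.map φ := by
  rw [Matrix.map_mul, Matrix.conjTranspose_map φ (map_star φ)]

section DecomposableRank

variable {A B C : Type*} [Ring A] [StarRing A] [Algebra ℂ A] [Ring B] [StarRing B] [Algebra ℂ B]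
  [Ring C] [StarRing C] [Algebra ℂ C]

lemma IsCompletelyPositive.starAlgHom_comp {ψ : A →ₗ[ℂ] B} (hψ : IsCompletelyPositive ψ)
    (β : B →⋆ₐ[ℂ] C) : IsCompletelyPositive ((β : B →ₗ[ℂ] C) ∘ₗ ψ) := by
  intro n M hM
  obtain ⟨N, hN⟩ := hψ n M hM
  refine ⟨N.map β, ?_⟩
  rw [← Matrix.map_conjTranspose_mul_self, ← hN, Matrix.map_map]
  rfl

lemma IsCompletelyPositive.comp_starAlgHom {ψ : B →ₗ[ℂ] C} (hψ : IsCompletelyPositive ψ)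
    (β : A →⋆ₐ[ℂ] B) : IsCompletelyPositive (ψ ∘ₗ (β : A →ₗ[ℂ] B)) := by
  rintro n M ⟨N, rfl⟩
  obtain ⟨N', hN'⟩ := hψ n ((Nᴴ * N).map β) ⟨N.map β, Matrix.map_conjTranspose_mul_self β N⟩
  exact ⟨N', by rw [← hN', Matrix.map_map]; rfl⟩

variable [Norm A] [Norm B] {d : ℕ}

lemma StarAlgEquiv.norm_symm_apply_of_norm_map {β : A ≃⋆ₐ[ℂ] B} (hβ : ∀ a, ‖β a‖ = ‖a‖)
    (b : B) : ‖β.symm b‖ = ‖b‖ := by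
  rw [← hβ, β.apply_symm_apply]

lemma IsDecomposableRank.image [DecidableEq B] {F : Finset A} {ε : ℝ} {k : ℕ}
    (h : IsDecomposableRank d F ε k) (β : A ≃⋆ₐ[ℂ] B) (hβ : ∀ a, ‖β a‖ = ‖a‖) :
    IsDecomposableRank d (F.image β) ε k := by
  obtain ⟨m, sz, ψ, φ, hψ, hψ_norm, hφ, happrox, hk⟩ := h
  refine ⟨m, sz, ψ ∘ₗ (β.symm : B →⋆ₐ[ℂ] A), fun i => (β : A →⋆ₐ[ℂ] B) ∘ₗ φ i,
    hψ.comp_starAlgHom _, fun b i j => by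
      simpa [β.norm_symm_apply_of_norm_map hβ] using hψ_norm (β.symm b) i j,
    fun i => ⟨(hφ i).1.starAlgHom_comp _, ?_, fun x hx => by simpa [hβ] using (hφ i).2.2 x hx⟩,
    ?_, hk⟩
  · intro x y hx hy hxy
    simp [← map_mul, (hφ i).2.1 x y hx hy hxy]
  · simp only [Finset.forall_mem_image]
    intro a ha
    simpa [← map_sum, ← map_sub, hβ] using happrox a ha

lemma rNuc_image [DecidableEq B] (β : A ≃⋆ₐ[ℂ] B) (hβ : ∀ a, ‖β a‖ = ‖a‖) (F : Finset A)
    (ε : ℝ) : rNuc d (F.image β) ε = rNuc d F ε := by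
  classical
  have hF : (F.image β).image β.symm = F := by
    simp [Finset.image_image, Function.comp_def]
  refine congrArg sInf (Set.ext fun k => ⟨fun h => ?_, fun h => h.image β hβ⟩)
  exact hF ▸ h.image β.symm (β.norm_symm_apply_of_norm_map hβ)

lemma rNuc_mono (hdim : NucDimLE A d) {ε : ℝ} (hε : 0 < ε) :
    Monotone fun F : Finset A => rNuc d F ε := by
  intro G F hGF
  obtain ⟨m, sz, ψ, φ, hψ, hψ_norm, hφ, happrox, hk⟩ := Nat.sInf_mem (hdim F ε hε)
  exact Nat.sInf_le ⟨m, sz, ψ, φ, hψ, hψ_norm, hφ, fun a ha => happrox a (hGF ha), hk⟩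

end DecomposableRank

lemma Real.monotone_log_natCast : Monotone fun n : ℕ => Real.log n := by
  intro m n hmn
  rcases m.eq_zero_or_pos with rfl | hm
  · simpa using Real.log_natCast_nonneg n
  · exact Real.log_le_log (by exact_mod_cast hm) (by exact_mod_cast hmn)

section HtNuc

variable {A : Type*} [Ring A] [StarRing A] [Algebra ℂ A] [Norm A] {d : ℕ}

lemma htNuc_eq_rankEntropy (f : A → A) :
    htNuc d f = rankEntropy (fun F ε => (rNuc d F ε : ℝ)) f := rfl

lemma htNuc_iterate (hdim : NucDimLE A d) (f : A → A) (K : ℕ) :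
    htNuc d (f^[K]) = ((K : ℝ) : EReal) * htNuc d f :=
  rankEntropy_iterate (fun _ hε => Real.monotone_log_natCast.comp (rNuc_mono hdim hε)) f K

lemma htNuc_symm_of_norm_map (β : A ≃⋆ₐ[ℂ] A) (hβ : ∀ a, ‖β a‖ = ‖a‖) :
    htNuc d β.symm = htNuc d β := by
  classical
  rw [htNuc_eq_rankEntropy, htNuc_eq_rankEntropy]
  exact rankEntropy_of_leftInverse β.symm_apply_apply fun F ε => by
    simp only [rNuc_image β.symm (β.norm_symm_apply_of_norm_map hβ)]

end HtNuc

/-- For an automorphism `α` of a C*-algebra of finite nuclear dimension,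
`ht_nuc(α^k) = |k| · ht_nuc(α)` for every integer `k`. -/
theorem htNuc_zpow
    {A : Type*} [NormedRing A] [StarRing A] [CStarRing A] [NormedAlgebra ℂ A]
    [CompleteSpace A] [StarModule ℂ A]
    (d : ℕ) (hdim : NucDimLE A d) (α : A ≃⋆ₐ[ℂ] A) (k : ℤ) :
    htNuc d (⇑((α.toRingEquiv.toEquiv : Equiv.Perm A) ^ k)) =
      ((k.natAbs : ℝ) : EReal) * htNuc d ⇑α := by
  let _ : CStarAlgebra A := {}
  obtain ⟨K, rfl | rfl⟩ := k.eq_nat_or_neg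
  · rw [zpow_natCast, Equiv.Perm.coe_pow, Int.natAbs_natCast]
    exact htNuc_iterate hdim α K
  · rw [zpow_neg, zpow_natCast, ← inv_pow, Equiv.Perm.coe_pow, Int.natAbs_neg,
      Int.natAbs_natCast]
    rw [show ⇑(α.toRingEquiv.toEquiv : Equiv.Perm A)⁻¹ = α.symm from rfl, htNuc_iterate hdim,
      htNuc_symm_of_norm_map α (StarAlgEquiv.norm_map α)]
end
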